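/- For a filtered object V the two canonical morphisms from V̂ to its double completion — the unit r_{V̂} : V̂ → (V̂)^∧ and the completion of the unit, (r_V)^∧ : V̂ → (V̂)^∧ — coincide. -/

import Mathlib

/-!
STATEMENT 3: For a filtered object `V` the two canonical morphisms from `V̂` to its double
completion — the unit `r_{V̂} : V̂ → (V̂)^∧` and the completion of the unit
`(r_V)^∧ : V̂ → (V̂)^∧` — coincide.
-/

open CategoryTheory CategoryTheory.Limits Opposite

universe v u

variable {A : Type u} [Category.{v} A] [Abelian A]
  [HasCoproducts A] [AB4 A] [HasLimitsOfShape ℕᵒᵖ A]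

/-- A filtered object: an `ℕᵒᵖ`-indexed diagram all of whose structure maps are monos. -/
def IsFilteredObj (V : ℕᵒᵖ ⥤ A) : Prop :=
  ∀ {a b : ℕᵒᵖ} (f : a ⟶ b), Mono (V.map f)

/-- The diagram `a ↦ coker (i_a : F_a V ⟶ F_0 V)`. -/
noncomputable def cokerDiagram (V : ℕᵒᵖ ⥤ A) : ℕᵒᵖ ⥤ A where
  obj a := cokernel (V.map (homOfLE (Nat.zero_le a.unop)).op)
  map {a b} f := cokernel.map _ _ (V.map f) (𝟙 _) (by
    rw [Category.comp_id, ← V.map_comp]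
    congr 1)
  map_id := by intro a; ext; simp
  map_comp := by intro a b c f g; ext; simp

/-- The completion `V̂` of a filtered object, with `F_e V̂ = ker (lim_a coker i_a → coker i_e)`. -/
noncomputable def completion (V : ℕᵒᵖ ⥤ A) : ℕᵒᵖ ⥤ A where
  obj e := kernel (limit.π (cokerDiagram V) e)
  map {a b} f := kernel.lift _ (kernel.ι _) (by
    rw [← limit.w (cokerDiagram V) f, ← Category.assoc, kernel.condition, zero_comp])
  map_id := by intro a; ext; simp
  map_comp := by intro a b c f g; ext; simp

/-- The canonical map `F₀ W ⟶ lim_a coker (F_a W → F₀ W)`. -/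
noncomputable def toCompletionZero (W : ℕᵒᵖ ⥤ A) : W.obj (op 0) ⟶ limit (cokerDiagram W) :=
  limit.lift _
    { pt := W.obj (op 0)
      π :=
        { app := fun _ => cokernel.π _
          naturality := by
            intro a b f
            simp [cokerDiagram, cokernel.map] } }

/-- A filtered object is complete when the canonical map
`F₀ W → lim_a coker (F_a W → F₀ W)` is an isomorphism. -/
def IsCompleteObj (W : ℕᵒᵖ ⥤ A) : Prop := IsIso (toCompletionZero W)

/-- The canonical (unit) morphism `r : V ⟶ V̂`. -/
noncomputable def unitMap (V : ℕᵒᵖ ⥤ A) : V ⟶ completion V where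
  app e := kernel.lift _ (V.map (homOfLE (Nat.zero_le e.unop)).op ≫ toCompletionZero V) (by
    rw [Category.assoc]
    have : toCompletionZero V ≫ limit.π (cokerDiagram V) e = cokernel.π _ := by
      first
        | exact limit.lift_π _ _
        | (simp [toCompletionZero] <;> rfl)
    rw [this]
    exact cokernel.condition _)
  naturality := by
    intro a b f
    dsimp only [completion]
    ext
    simp only [Category.assoc, kernel.lift_ι, kernel.lift_ι_assoc]
    rw [← Category.assoc, ← V.map_comp]
    congr 2

/-- The morphism of `coker`-diagrams induced by a morphism of filtered objects. -/
noncomputable def cokerDiagramMap {V W : ℕᵒᵖ ⥤ A} (φ : V ⟶ W) :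
    cokerDiagram V ⟶ cokerDiagram W where
  app e := cokernel.map _ _ (φ.app _) (φ.app _) (φ.naturality _)
  naturality := by
    intro a b f
    dsimp only [cokerDiagram]
    ext
    simp [φ.naturality]

/-- The completion of a morphism of filtered objects. -/
noncomputable def completionHom {V W : ℕᵒᵖ ⥤ A} (φ : V ⟶ W) :
    completion V ⟶ completion W where
  app e := kernel.lift _ (kernel.ι _ ≫ limMap (cokerDiagramMap φ)) (by
    first
      | (erw [Category.assoc, limMap_π, ← Category.assoc, kernel.condition, zero_comp])
      | (simp only [Category.assoc, limMap_π]
         erw [← Category.assoc, kernel.condition, zero_comp]))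
  naturality := by
    intro a b f
    dsimp only [completion]
    ext
    simp

/-!
Both maps land in `F_e (V̂)^∧ ⊆ lim_a coker (F_a V̂ → F₀ V̂)`, so it suffices to compare their
components. Let `p : F₀ V̂ → coker i_a` be the projection from the limit. Then `r_V ≫ p` is the
quotient `F₀ V → coker i_a`, so `p` is epi; its kernel is `F_a V̂`, hence the quotient
`F₀ V̂ → coker (F_a V̂ → F₀ V̂)` factors as `p ≫ g`. The map `g` and the map
`coker i_a → coker (F_a V̂ → F₀ V̂)` induced by `r_V` agree after the epi `F₀ V → coker i_a`, so
they are equal, which is the claim.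
-/

section

omit [HasCoproducts A] [AB4 A]

variable (V : ℕᵒᵖ ⥤ A)

noncomputable def completionι (e : ℕᵒᵖ) : (completion V).obj e ⟶ limit (cokerDiagram V) :=
  kernel.ι _

instance mono_completionι (e : ℕᵒᵖ) : Mono (completionι V e) :=
  equalizer.ι_mono

lemma completion_map_comp_completionι {a b : ℕᵒᵖ} (f : a ⟶ b) :
    (completion V).map f ≫ completionι V b = completionι V a :=
  kernel.lift_ι _ _ _

lemma unitMap_app_comp_completionι (e : ℕᵒᵖ) :
    (unitMap V).app e ≫ completionι V e
      = V.map (homOfLE (Nat.zero_le e.unop)).op ≫ toCompletionZero V :=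
  kernel.lift_ι _ _ _

lemma completionHom_app_comp_completionι {W : ℕᵒᵖ ⥤ A} (φ : V ⟶ W) (e : ℕᵒᵖ) :
    (completionHom φ).app e ≫ completionι W e = completionι V e ≫ limMap (cokerDiagramMap φ) :=
  kernel.lift_ι _ _ _

lemma toCompletionZero_π (a : ℕᵒᵖ) :
    toCompletionZero V ≫ limit.π (cokerDiagram V) a
      = cokernel.π (V.map (homOfLE (Nat.zero_le a.unop)).op) :=
  limit.lift_π _ _

omit [HasLimitsOfShape ℕᵒᵖ A] in
lemma π_cokerDiagramMap_app {W : ℕᵒᵖ ⥤ A} (φ : V ⟶ W) (a : ℕᵒᵖ) :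
    cokernel.π (V.map (homOfLE (Nat.zero_le a.unop)).op) ≫ (cokerDiagramMap φ).app a
      = φ.app (op 0) ≫ cokernel.π (W.map (homOfLE (Nat.zero_le a.unop)).op) :=
  cokernel.π_desc _ _ _

noncomputable def completionπ (a : ℕᵒᵖ) : (completion V).obj (op 0) ⟶ (cokerDiagram V).obj a :=
  completionι V (op 0) ≫ limit.π (cokerDiagram V) a

lemma unitMap_app_zero_comp_completionπ (a : ℕᵒᵖ) :
    (unitMap V).app (op 0) ≫ completionπ V a
      = cokernel.π (V.map (homOfLE (Nat.zero_le a.unop)).op) := by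
  have hid : V.map (homOfLE (Nat.zero_le (op 0 : ℕᵒᵖ).unop)).op = 𝟙 _ := V.map_id _
  rw [completionπ, ← Category.assoc, unitMap_app_comp_completionι, hid, Category.id_comp,
    toCompletionZero_π]

instance epi_completionπ (a : ℕᵒᵖ) : Epi (completionπ V a) :=
  -- `(cokerDiagram V).obj a` is a cokernel only up to unfolding, so instance search misses this
  @epi_of_epi_fac _ _ _ _ _ _ _ _ coequalizer.π_epi (unitMap_app_zero_comp_completionπ V a)

lemma exists_comp_completion_map_eq {X : A} (a : ℕᵒᵖ) (w : X ⟶ (completion V).obj (op 0))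
    (hw : w ≫ completionπ V a = 0) :
    ∃ l : X ⟶ (completion V).obj a, l ≫ (completion V).map (homOfLE (Nat.zero_le a.unop)).op = w :=
  ⟨kernel.lift _ (w ≫ completionι V _) ((Category.assoc _ _ _).trans hw),
    (cancel_mono (completionι V (op 0))).1 <| (Category.assoc _ _ _).trans <|
      (_ ≫= completion_map_comp_completionι V _).trans (kernel.lift_ι _ _ _)⟩

lemma kernel_ι_completionπ_comp_π (a : ℕᵒᵖ) :
    kernel.ι (completionπ V a) ≫
      cokernel.π ((completion V).map (homOfLE (Nat.zero_le a.unop)).op) = 0 := by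
  obtain ⟨l, hl⟩ := exists_comp_completion_map_eq V a _ (kernel.condition _)
  rw [← hl, Category.assoc, cokernel.condition, comp_zero]

lemma completionπ_comp_cokerDiagramMap_unitMap (a : ℕᵒᵖ) :
    completionπ V a ≫ (cokerDiagramMap (unitMap V)).app a
      = cokernel.π ((completion V).map (homOfLE (Nat.zero_le a.unop)).op) := by
  set g := Abelian.epiDesc (completionπ V a) _ (kernel_ι_completionπ_comp_π V a)
  have hg : completionπ V a ≫ g = _ := Abelian.comp_epiDesc _ _ _
  suffices (cokerDiagramMap (unitMap V)).app a = g from (_ ≫= this).trans hg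
  refine (cancel_epi (cokernel.π (V.map (homOfLE (Nat.zero_le a.unop)).op))).1 ?_
  rw [π_cokerDiagramMap_app, ← hg, ← Category.assoc, unitMap_app_zero_comp_completionπ]
  rfl

end

theorem statement3_general (V : ℕᵒᵖ ⥤ A) :
    unitMap (completion V) = completionHom (unitMap V) := by
  ext e : 2
  refine (cancel_mono (completionι (completion V) e)).1 ?_
  rw [unitMap_app_comp_completionι, completionHom_app_comp_completionι]
  refine limit.hom_ext fun a => ?_
  rw [Category.assoc, Category.assoc, toCompletionZero_π, limMap_π,
    ← completion_map_comp_completionι V (homOfLE (Nat.zero_le e.unop)).op, Category.assoc,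
    ← Category.assoc _ (limit.π _ a), ← completionπ, completionπ_comp_cokerDiagramMap_unitMap]

/-- The unit of the completion at `V̂` coincides with the completion of the unit at `V`:
`r_{V̂} = (r_V)^∧ : V̂ ⟶ (V̂)^∧`. -/
theorem statement3 (V : ℕᵒᵖ ⥤ A) (hV : IsFilteredObj V) :
    unitMap (completion V) = completionHom (unitMap V) :=
  statement3_general V
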